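/- arXiv:2505.22448 — 2 statements merged into one kernel-verified Lean document; each statement's English description precedes it below -/
import Mathlib

section
/- Let f, g : [0,1] → ℕ̄ be lower semicontinuous. Suppose that for every t ∈ [0,1] there exist an open neighborhood U of t in [0,1] and c ∈ ℕ with f(s) ≤ c ≤ g(s) for all s ∈ U, and suppose that g is not a constant function with finite value (i.e. there is no n ∈ ℕ with g(t) = n for all t). Then there exist a continuous function g̃ : [0,1] → ℝ and a nonempty open subset V ⊆ [0,1] such that f(t) ≤ g̃(t) ≤ g(t) for all t ∈ [0,1] and g̃(t) < g(t) for all t ∈ V. -/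
open scoped ENNReal

/-- The canonical order embedding of `ℕ∞ = ℕ ∪ {∞}` into the extended reals,
used to compare `ℕ∞`-valued functions with real-valued functions:
`f t ≤ (g̃ t : EReal)` says that `f t` is a finite natural number whose real coercion
is at most `g̃ t`, and `(g̃ t : EReal) ≤ g t` (resp. `<`) is interpreted with `∞`
dominating every real number. -/
noncomputable def ENat.toEReal (a : ℕ∞) : EReal := ((a : ℝ≥0∞) : EReal)

/-!
Near a point `t₀` where `g` exceeds a local interpolating constant `c₀`, keep the constant `c₀`;
elsewhere glue the local constants `c` with `f ≤ c ≤ g` by a partition of unity. Each value of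
the glued function is a convex combination of constants lying in the interval `[f t, g t]`, hence
lies in it, and it equals `c₀ < g` near `t₀`. Such a `t₀` exists because otherwise `g` would be
locally constant, hence constant on the connected interval.
-/

open Set Filter Topology

namespace ENat

theorem toEReal_strictMono : StrictMono ENat.toEReal :=
  EReal.coe_ennreal_strictMono.comp ENat.toENNReal_strictMono

@[simp]
theorem toEReal_natCast (n : ℕ) : ENat.toEReal n = ((n : ℝ) : EReal) := by
  rw [ENat.toEReal, ENat.toENNReal_coe, ← ENNReal.ofReal_natCast, EReal.coe_ennreal_ofReal,
    max_eq_left n.cast_nonneg]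

theorem natCast_mem_Icc_toEReal {a b : ℕ∞} {n : ℕ} (h : a ≤ n ∧ (n : ℕ∞) ≤ b) :
    ((n : ℝ) : EReal) ∈ Icc a.toEReal b.toEReal := by
  rw [← toEReal_natCast]
  exact ⟨toEReal_strictMono.monotone h.1, toEReal_strictMono.monotone h.2⟩

end ENat

section LocallySeparated

variable {X : Type*} [TopologicalSpace X]

theorem exists_continuous_mem_Icc_eqOn_of_locally_const [NormalSpace X] [ParacompactSpace X]
    {a b : X → EReal} (hloc : ∀ x, ∃ c : ℝ, ∀ᶠ y in 𝓝 x, (c : EReal) ∈ Icc (a y) (b y))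
    {K : Set X} (hK : IsClosed K) {c₀ : ℝ} (hc₀ : ∀ᶠ y in 𝓝ˢ K, (c₀ : EReal) ∈ Icc (a y) (b y)) :
    ∃ h : X → ℝ, Continuous h ∧ (∀ x, (h x : EReal) ∈ Icc (a x) (b x)) ∧ EqOn h (fun _ ↦ c₀) K := by
  choose c hc using hloc
  choose U hUc hUo hxU using fun x ↦ eventually_nhds_iff.1 (hc x)
  obtain ⟨W, hWo, hKW, hWc⟩ := eventually_nhdsSet_iff_exists.1 hc₀
  let U' : Option X → Set X := fun i ↦ i.elim W fun x ↦ U x \ K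
  let c' : Option X → ℝ := fun i ↦ i.elim c₀ c
  have hU'c : ∀ i, ∀ y ∈ U' i, (c' i : EReal) ∈ Icc (a y) (b y) := by
    rintro (_ | x) y hy
    exacts [hWc y hy, hUc x y hy.1]
  have hU'K : ∀ i, ∀ y ∈ U' i, y ∈ K → c' i = c₀ := by
    rintro (_ | x) y hy hyK
    exacts [rfl, (hy.2 hyK).elim]
  have hcover : univ ⊆ ⋃ i, U' i := fun y _ ↦ by
    by_cases hy : y ∈ K
    exacts [mem_iUnion_of_mem none (hKW hy), mem_iUnion_of_mem (some y) ⟨hxU y, hy⟩]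
  obtain ⟨φ, hφ⟩ := PartitionOfUnity.exists_isSubordinate isClosed_univ U'
    (by rintro (_ | x); exacts [hWo, (hUo x).sdiff hK]) hcover
  have hmem : ∀ {x i}, φ i x ≠ 0 → x ∈ U' i := fun hi ↦ hφ _ (subset_tsupport _ hi)
  have hconvex : ∀ {x} {t : Set ℝ}, Convex ℝ t → (∀ i, φ i x ≠ 0 → c' i ∈ t) →
      ∑ᶠ i, φ i x • c' i ∈ t := fun ht ↦
    ht.finsum_mem (fun i ↦ φ.nonneg i _) (φ.sum_eq_one (mem_univ _))
  refine ⟨fun x ↦ ∑ᶠ i, φ i x • c' i, φ.continuous_finsum_smul fun _ _ _ ↦ continuousAt_const,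
    fun x ↦ ?_, fun x hx ↦ ?_⟩
  · exact hconvex ((ordConnected_Icc.preimage_mono EReal.coe_strictMono.monotone).convex)
      fun i hi ↦ hU'c i x (hmem hi)
  · exact hconvex (convex_singleton c₀) fun i hi ↦ hU'K i x (hmem hi) hx

theorem exists_natCast_lt_of_locally_between [PreconnectedSpace X] [Nonempty X] {f g : X → ℕ∞}
    (hloc : ∀ x, ∃ c : ℕ, ∀ᶠ y in 𝓝 x, f y ≤ c ∧ (c : ℕ∞) ≤ g y)
    (hnc : ¬ ∃ n : ℕ, ∀ x, g x = n) :
    ∃ x₀, ∃ c₀ : ℕ, (∀ᶠ y in 𝓝 x₀, f y ≤ c₀ ∧ (c₀ : ℕ∞) ≤ g y) ∧ (c₀ : ℕ∞) < g x₀ := by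
  by_contra! hle
  have hlocal : ∀ x, ∃ c : ℕ, ∀ᶠ y in 𝓝 x, g y = c := fun x ↦ by
    obtain ⟨c, hc⟩ := hloc x
    exact ⟨c, hc.eventually_nhds.mono fun y hy ↦ le_antisymm (hle y c hy) hy.self_of_nhds.2⟩
  have hg : IsLocallyConstant g := (IsLocallyConstant.iff_eventually_eq g).2 fun x ↦ by
    obtain ⟨c, hc⟩ := hlocal x
    exact hc.mono fun y hy ↦ hy.trans hc.self_of_nhds.symm
  obtain ⟨c, hc⟩ := hlocal (Classical.arbitrary X)
  exact hnc ⟨c, fun x ↦ (hg.apply_eq_of_preconnectedSpace x _).trans hc.self_of_nhds⟩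

end LocallySeparated

theorem stmt_6_general (f g : Set.Icc (0:ℝ) 1 → ℕ∞)
    (hg : LowerSemicontinuous g)
    (hloc : ∀ t : Set.Icc (0:ℝ) 1, ∃ U : Set (Set.Icc (0:ℝ) 1), IsOpen U ∧ t ∈ U ∧
      ∃ c : ℕ, ∀ s ∈ U, f s ≤ (c : ℕ∞) ∧ (c : ℕ∞) ≤ g s)
    (hnc : ¬ ∃ n : ℕ, ∀ t, g t = (n : ℕ∞)) :
    ∃ (g' : Set.Icc (0:ℝ) 1 → ℝ) (V : Set (Set.Icc (0:ℝ) 1)),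
      Continuous g' ∧ IsOpen V ∧ V.Nonempty ∧
      (∀ t, (f t).toEReal ≤ (g' t : EReal) ∧ (g' t : EReal) ≤ (g t).toEReal) ∧
      (∀ t ∈ V, (g' t : EReal) < (g t).toEReal) := by
  have hloc' : ∀ t, ∃ c : ℕ, ∀ᶠ s in 𝓝 t, f s ≤ c ∧ (c : ℕ∞) ≤ g s := fun t ↦ by
    obtain ⟨U, hU, htU, c, hc⟩ := hloc t
    exact ⟨c, eventually_nhds_iff.2 ⟨U, hc, hU, htU⟩⟩
  obtain ⟨t₀, c₀, hc₀, hlt⟩ := exists_natCast_lt_of_locally_between hloc' hnc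
  obtain ⟨K, hKt₀, hK, hc₀K⟩ := exists_mem_nhds_isClosed_subset hc₀.eventually_nhds
  obtain ⟨g', hg'c, hg'fg, hg'K⟩ := exists_continuous_mem_Icc_eqOn_of_locally_const
    (a := fun t ↦ (f t).toEReal) (b := fun t ↦ (g t).toEReal)
    (fun t ↦ let ⟨c, hc⟩ := hloc' t; ⟨c, hc.mono fun s ↦ ENat.natCast_mem_Icc_toEReal⟩) hK
    (c₀ := c₀) (eventually_nhdsSet_iff_forall.2 fun t ht ↦
      (hc₀K ht).mono fun s ↦ ENat.natCast_mem_Icc_toEReal)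
  refine ⟨g', interior K ∩ {s | (c₀ : ℕ∞) < g s}, hg'c, isOpen_interior.inter
    (hg.isOpen_preimage c₀), ⟨t₀, mem_interior_iff_mem_nhds.2 hKt₀, hlt⟩, hg'fg, ?_⟩
  rintro t ⟨htK, hct⟩
  rw [hg'K (interior_subset htK), ← ENat.toEReal_natCast]
  exact ENat.toEReal_strictMono hct

/-- Let `f, g : [0,1] → ℕ∞` be lower semicontinuous satisfying the local
interpolation condition, and suppose `g` is not a constant function with finite value.
Then there are a continuous `g̃ : [0,1] → ℝ` and a nonempty open `V ⊆ [0,1]` such that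
`f ≤ g̃ ≤ g` everywhere and `g̃ < g` on `V`. -/
theorem stmt_6 (f g : Set.Icc (0:ℝ) 1 → ℕ∞)
    (hf : LowerSemicontinuous f) (hg : LowerSemicontinuous g)
    (hloc : ∀ t : Set.Icc (0:ℝ) 1, ∃ U : Set (Set.Icc (0:ℝ) 1), IsOpen U ∧ t ∈ U ∧
      ∃ c : ℕ, ∀ s ∈ U, f s ≤ (c : ℕ∞) ∧ (c : ℕ∞) ≤ g s)
    (hnc : ¬ ∃ n : ℕ, ∀ t, g t = (n : ℕ∞)) :
    ∃ (g' : Set.Icc (0:ℝ) 1 → ℝ) (V : Set (Set.Icc (0:ℝ) 1)),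
      Continuous g' ∧ IsOpen V ∧ V.Nonempty ∧
      (∀ t, (f t).toEReal ≤ (g' t : EReal) ∧ (g' t : EReal) ≤ (g t).toEReal) ∧
      (∀ t ∈ V, (g' t : EReal) < (g t).toEReal) :=
  stmt_6_general f g hg hloc hnc
end

section
/- Let H be a complex Hilbert space, let c ∈ B(H) be a positive compact operator with rank(c) = n < ∞, let ε > 0, and let a ∈ B(H) be a positive operator with ‖a − c‖ < ε. Then rank((a − ε)₊) ≤ n. -/
open scoped ENNReal

/-- The rank of a bounded operator: the Hilbert-space dimension (as an element of
`ℕ∞ = ℕ ∪ {∞}`) of the closure of its range. -/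
noncomputable def opRank {H : Type*} [NormedAddCommGroup H] [InnerProductSpace ℂ H]
    (a : H →L[ℂ] H) : ℕ∞ :=
  Cardinal.toENat (Module.rank ℂ (LinearMap.range (a : H →ₗ[ℂ] H)).topologicalClosure)

/-- The `ε`-cut-down `(a - ε)₊` of an operator, i.e. the continuous functional calculus of
`a` applied to the function `s ↦ max (s - ε) 0`. -/
noncomputable def cutDown {H : Type*} [NormedAddCommGroup H] [InnerProductSpace ℂ H]
    [CompleteSpace H] (a : H →L[ℂ] H) (ε : ℝ) : H →L[ℂ] H :=
  cfc (fun s : ℝ => max (s - ε) 0) a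

/-!
On the closure `W` of the range of `(a - ε)₊` the quadratic form of `a` dominates `ε ‖x‖²`,
since `(a - ε)₊ a (a - ε)₊ ≥ ε (a - ε)₊²` by functional calculus. On the orthogonal complement
of the range of `c` the quadratic form of `a` equals that of `a - c`, which is `< ε ‖x‖²` for
`x ≠ 0`. Hence `W` meets that complement trivially, so the orthogonal projection onto the
closure of the range of `c` is injective on `W`, and `rank (a - ε)₊ ≤ rank c`.
-/

open scoped InnerProductSpace

section CutDown

variable {H : Type*} [NormedAddCommGroup H] [InnerProductSpace ℂ H] [CompleteSpace H]
  {a : H →L[ℂ] H}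

lemma smul_cutDown_mul_cutDown_le (ha : IsSelfAdjoint a) (ε : ℝ) :
    ε • (cutDown a ε * cutDown a ε) ≤ cutDown a ε * a * cutDown a ε := by
  set f : ℝ → ℝ := fun s => max (s - ε) 0
  have hcomp : cfc (fun s => f s * s * f s) a = cutDown a ε * a * cutDown a ε := by
    rw [cfc_mul (fun s => f s * s) f a, cfc_mul f (fun s : ℝ => s) a, cfc_id' ℝ a]
    rfl
  have hsq : cfc (fun s => ε * (f s * f s)) a = ε • (cutDown a ε * cutDown a ε) := by
    rw [cfc_const_mul ε (fun s => f s * f s) a, cfc_mul f f a]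
    rfl
  rw [← hcomp, ← hsq]
  refine cfc_mono fun s _ => ?_
  rcases le_total (s - ε) 0 with h | h
  · simp [f, max_eq_right h]
  · simp only [f, max_eq_left h]
    nlinarith [mul_nonneg h h]

lemma mul_norm_sq_le_re_inner_cutDown (ha : IsSelfAdjoint a) (ε : ℝ) (y : H) :
    ε * ‖cutDown a ε y‖ ^ 2 ≤ RCLike.re ⟪a (cutDown a ε y), cutDown a ε y⟫_ℂ := by
  set b := cutDown a ε
  have hb : ∀ u v, ⟪b u, v⟫_ℂ = ⟪u, b v⟫_ℂ := (cfc_predicate _ a : IsSelfAdjoint b).isSymmetric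
  have hpos := ((ContinuousLinearMap.le_def _ _).mp
    (smul_cutDown_mul_cutDown_le ha ε)).re_inner_nonneg_left y
  have hform : RCLike.re ⟪(b * a * b - ε • (b * b)) y, y⟫_ℂ
      = RCLike.re ⟪a (b y), b y⟫_ℂ - ε * ‖b y‖ ^ 2 := by
    rw [sub_apply, inner_sub_left, map_sub, smul_apply, RCLike.real_smul_eq_coe_smul (K := ℂ),
      inner_smul_real_left, RCLike.smul_re, ← inner_self_eq_norm_sq (𝕜 := ℂ)]
    change RCLike.re ⟪b (a (b y)), y⟫_ℂ - ε * RCLike.re ⟪b (b y), y⟫_ℂ = _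
    rw [hb, hb]
  rw [hform] at hpos
  linarith

lemma mul_norm_sq_le_re_inner_of_mem_closure_range_cutDown (ha : IsSelfAdjoint a) (ε : ℝ)
    {x : H} (hx : x ∈ (LinearMap.range (cutDown a ε : H →ₗ[ℂ] H)).topologicalClosure) :
    ε * ‖x‖ ^ 2 ≤ RCLike.re ⟪a x, x⟫_ℂ := by
  have hclosed : IsClosed {x : H | ε * ‖x‖ ^ 2 ≤ RCLike.re ⟪a x, x⟫_ℂ} :=
    isClosed_le (by fun_prop) (RCLike.continuous_re.comp (a.continuous.inner continuous_id))
  rw [← SetLike.mem_coe, Submodule.topologicalClosure_coe] at hx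
  refine hclosed.closure_subset_iff.mpr ?_ hx
  rintro _ ⟨y, rfl⟩
  exact mul_norm_sq_le_re_inner_cutDown ha ε y

end CutDown

section Orthogonal

variable {𝕜 E : Type*} [RCLike 𝕜] [NormedAddCommGroup E] [InnerProductSpace 𝕜 E]

lemma Submodule.rank_le_of_inf_orthogonal_eq_bot {W C : Submodule 𝕜 E}
    [C.HasOrthogonalProjection] (h : W ⊓ Cᗮ = ⊥) : Module.rank 𝕜 W ≤ Module.rank 𝕜 C := by
  refine LinearMap.rank_le_of_injective
    ((C.orthogonalProjectionOnto : E →ₗ[𝕜] C) ∘ₗ W.subtype) ?_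
  rw [← LinearMap.ker_eq_bot, LinearMap.ker_comp, Submodule.ker_orthogonalProjectionOnto,
    ← Submodule.disjoint_iff_comap_eq_bot]
  exact disjoint_iff.mpr h

lemma ContinuousLinearMap.re_inner_le_norm_sub_mul_sq_of_mem_orthogonal_range
    {a c : E →L[𝕜] E} {x : E} (hx : x ∈ (LinearMap.range (c : E →ₗ[𝕜] E))ᗮ) :
    RCLike.re ⟪a x, x⟫_𝕜 ≤ ‖a - c‖ * ‖x‖ ^ 2 := by
  have hcx : ⟪c x, x⟫_𝕜 = 0 :=
    Submodule.inner_right_of_mem_orthogonal (LinearMap.mem_range_self _ x) hx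
  calc RCLike.re ⟪a x, x⟫_𝕜 = RCLike.re ⟪(a - c) x, x⟫_𝕜 := by
        rw [sub_apply, inner_sub_left, hcx, sub_zero]
    _ ≤ ‖(a - c) x‖ * ‖x‖ := re_inner_le_norm _ _
    _ ≤ ‖a - c‖ * ‖x‖ * ‖x‖ := by gcongr; exact (a - c).le_opNorm x
    _ = ‖a - c‖ * ‖x‖ ^ 2 := by ring

end Orthogonal

theorem stmt_10_general {H : Type*} [NormedAddCommGroup H] [InnerProductSpace ℂ H] [CompleteSpace H]
    (c : H →L[ℂ] H)
    (n : ℕ) (hrank : opRank c = (n : ℕ∞))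
    (ε : ℝ)
    (a : H →L[ℂ] H) (hapos : a.IsPositive) (hnorm : ‖a - c‖ < ε) :
    opRank (cutDown a ε) ≤ (n : ℕ∞) := by
  set C := (LinearMap.range (c : H →ₗ[ℂ] H)).topologicalClosure
  have hdisj : (LinearMap.range (cutDown a ε : H →ₗ[ℂ] H)).topologicalClosure ⊓ Cᗮ = ⊥ := by
    refine (Submodule.eq_bot_iff _).mpr fun x ⟨hxW, hxC⟩ => ?_
    rw [Submodule.orthogonal_closure] at hxC
    have hlower := mul_norm_sq_le_re_inner_of_mem_closure_range_cutDown hapos.isSelfAdjoint ε hxW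
    have hupper := ContinuousLinearMap.re_inner_le_norm_sub_mul_sq_of_mem_orthogonal_range
      (a := a) hxC
    by_contra hx0
    have hsq : 0 < ‖x‖ ^ 2 := by positivity
    exact (mul_lt_mul_of_pos_right hnorm hsq).not_ge (hlower.trans hupper)
  rw [← hrank]
  exact Cardinal.toENat.monotone' (Submodule.rank_le_of_inf_orthogonal_eq_bot hdisj)

/-- If `c` is a positive compact operator of finite rank `n` on a complex
Hilbert space, `ε > 0`, and `a` is a positive operator with `‖a − c‖ < ε`, then the
cut-down `(a − ε)₊` has rank at most `n`. -/
theorem stmt_10 {H : Type*} [NormedAddCommGroup H] [InnerProductSpace ℂ H] [CompleteSpace H]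
    (c : H →L[ℂ] H) (hcpos : c.IsPositive) (hccpt : IsCompactOperator c)
    (n : ℕ) (hrank : opRank c = (n : ℕ∞))
    (ε : ℝ) (hε : 0 < ε)
    (a : H →L[ℂ] H) (hapos : a.IsPositive) (hnorm : ‖a - c‖ < ε) :
    opRank (cutDown a ε) ≤ (n : ℕ∞) :=
  stmt_10_general c n hrank ε a hapos hnorm
end
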